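/- arXiv:2112.12120 — 2 statements merged into one kernel-verified Lean document; each statement's English description precedes it below -/
import Mathlib

section
/- Let τ > 0 and let A : [0,τ) → ℝ^{n×n} be continuous. Assume the system ẋ = A(t)x is prescribed-time attractive at τ, and that for every pair of indices i,j, the entry A_{ij}(t) tends to a limit in the extended reals [−∞,+∞] as t → τ⁻. Then there exist indices i,j such that |A_{ij}(t)| → +∞ as t → τ⁻. -/
/-!
If no entry of `A` diverges, every entry has a finite limit at `τ`, so `A` extends to a continuous
matrix function on all of `ℝ` and is bounded, say by `M` in operator norm, near `[0, τ]`.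
Grönwall's inequality, run backwards in time, then bounds every solution from below by
`‖x t‖ ≥ e^{-M (t + 1)} ‖x (-1)‖`, so a solution with `x (-1) ≠ 0` cannot tend to `0`.
Such a solution exists on all of `[-1, τ + 1]`: for a linear field bounded by `M`,
Picard–Lindelöf gives solutions on every interval of length `1 / (2 M)`, whatever the initial
value, and these glue together.
-/

open Matrix Filter Topology

/-- Eigenvalues of a real matrix that is Hermitian (= symmetric); junk value `0` otherwise. -/
noncomputable def eigs {n : ℕ} (M : Matrix (Fin n) (Fin n) ℝ) : Fin n → ℝ :=
  if h : M.IsHermitian then h.eigenvalues else 0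

/-- Largest eigenvalue of a real symmetric matrix. -/
noncomputable def lamMax {n : ℕ} (M : Matrix (Fin n) (Fin n) ℝ) : ℝ := ⨆ i, eigs M i

/-- Smallest eigenvalue of a real symmetric matrix. -/
noncomputable def lamMin {n : ℕ} (M : Matrix (Fin n) (Fin n) ℝ) : ℝ := ⨅ i, eigs M i

/-- Logarithmic norm w.r.t. the Euclidean norm: `μ(M) = λ_max((M + Mᵀ)/2)`. -/
noncomputable def logNorm {n : ℕ} (M : Matrix (Fin n) (Fin n) ℝ) : ℝ :=
  lamMax ((1 / 2 : ℝ) • (M + Mᵀ))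

/-- A matrix acting on Euclidean space. -/
noncomputable def mulVecE {n : ℕ} (M : Matrix (Fin n) (Fin n) ℝ)
    (v : EuclideanSpace ℝ (Fin n)) : EuclideanSpace ℝ (Fin n) :=
  Matrix.toEuclideanCLM (𝕜 := ℝ) M v

/-- Operator norm of a matrix induced by the Euclidean vector norm. -/
noncomputable def opNorm {n : ℕ} (M : Matrix (Fin n) (Fin n) ℝ) : ℝ :=
  ‖Matrix.toEuclideanCLM (𝕜 := ℝ) M‖

/-- The LTV system `x' = A t * x` is prescribed-time attractive (PTA) at time `τ`:
every solution on `[0, τ)` satisfies `‖x t‖ → 0` as `t → τ⁻`. -/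
def PTA {n : ℕ} (A : ℝ → Matrix (Fin n) (Fin n) ℝ) (τ : ℝ) : Prop :=
  ∀ x : ℝ → EuclideanSpace ℝ (Fin n),
    (∀ t ∈ Set.Ico (0 : ℝ) τ, HasDerivAt x (mulVecE (A t) (x t)) t) →
    Filter.Tendsto (fun t => ‖x t‖) (𝓝[<] τ) (𝓝 0)

open Set

section LinearODE

variable {E : Type*} [NormedAddCommGroup E] [NormedSpace ℝ E]

theorem IsIntegralCurveOn.piecewise_Icc {v : ℝ → E → E} {γ₁ γ₂ : ℝ → E} {a b c : ℝ}
    (h₁ : IsIntegralCurveOn γ₁ v (Icc a b)) (h₂ : IsIntegralCurveOn γ₂ v (Icc b c))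
    (hb : γ₁ b = γ₂ b) :
    IsIntegralCurveOn ((Iic b).piecewise γ₁ γ₂) v (Icc a c) := by
  classical
  set γ := (Iic b).piecewise γ₁ γ₂
  have heq₁ : EqOn γ γ₁ (Iic b) := fun s hs => piecewise_eq_of_mem _ _ _ hs
  have heq₂ : EqOn γ γ₂ (Ici b) := fun s hs => by
    rcases (show b ≤ s from hs).eq_or_lt with rfl | hlt
    · simp [γ, hb]
    · exact piecewise_eq_of_notMem _ _ _ (not_le.mpr hlt)
  intro t ht
  have hleft : HasDerivWithinAt γ (v t (γ t)) (Icc a b) t := by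
    by_cases htb : t ≤ b
    · rw [heq₁ htb]
      exact (h₁ t ⟨ht.1, htb⟩).congr_of_mem (fun s hs => heq₁ hs.2) ⟨ht.1, htb⟩
    · exact HasFDerivWithinAt.of_notMem_closure <| by
        rw [closure_Icc]; exact fun h => htb h.2
  have hright : HasDerivWithinAt γ (v t (γ t)) (Icc b c) t := by
    by_cases hbt : b ≤ t
    · rw [heq₂ hbt]
      exact (h₂ t ⟨hbt, ht.2⟩).congr_of_mem (fun s hs => heq₂ hs.1) ⟨hbt, ht.2⟩
    · exact HasFDerivWithinAt.of_notMem_closure <| by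
        rw [closure_Icc]; exact fun h => hbt h.1
  exact (hleft.union hright).mono Icc_subset_Icc_union_Icc

theorem IsIntegralCurveOn.norm_le_norm_mul_exp {v : ℝ → E → E} {γ : ℝ → E} {a b K : ℝ}
    (hab : a ≤ b) (hγ : IsIntegralCurveOn γ v (Icc a b))
    (hv : ∀ t ∈ Icc a b, ∀ x, ‖v t x‖ ≤ K * ‖x‖) :
    ‖γ a‖ ≤ ‖γ b‖ * Real.exp (K * (b - a)) := by
  -- Grönwall's inequality for the time-reversed curve `t ↦ γ (-t)` on `[-b, -a]`
  have hrev := hγ.comp_mul (-1)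
  have hset : {t : ℝ | t * -1 ∈ Icc a b} = Icc (-b) (-a) := by
    ext t; simp only [mem_ofPred_eq, mem_Icc, mul_neg_one, le_neg, neg_le, and_comm]
  rw [hset] at hrev
  have hgronwall := norm_le_gronwallBound_of_norm_deriv_right_le (K := K) (ε := 0)
    hrev.continuousOn
    (fun t ht => (hrev t (Ico_subset_Icc_self ht)).mono_of_mem_nhdsWithin
      (Icc_mem_nhdsGE_of_mem ht))
    le_rfl
    (fun t ht => by simpa using hv _ ⟨by linarith [ht.2], by linarith [ht.1]⟩ _)
    (-a) ⟨by linarith, le_rfl⟩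
  simpa [gronwallBound_ε0, neg_add_eq_sub] using hgronwall

variable [CompleteSpace E]

theorem exists_isIntegralCurveOn_Icc_of_norm_le {f : ℝ → E →L[ℝ] E} {a b M : ℝ} (hab : a ≤ b)
    (hf : ContinuousOn f (Icc a b)) (hM : ∀ t ∈ Icc a b, ‖f t‖ ≤ M) (hMh : M * (b - a) ≤ 1 / 2)
    (x₀ : E) : ∃ γ, γ a = x₀ ∧ IsIntegralCurveOn γ (fun t => f t) (Icc a b) := by
  have hM₀ : 0 ≤ M := (norm_nonneg _).trans (hM a ⟨le_rfl, hab⟩)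
  lift M to NNReal using hM₀
  have hpl : IsPicardLindelof (fun t => f t) (⟨a, le_rfl, hab⟩ : Icc a b) x₀ ‖x₀‖₊ 0
      (2 * M * ‖x₀‖₊) M := by
    refine ⟨fun t ht => ?_, fun x _ => hf.clm_apply continuousOn_const, fun t ht x hx => ?_, ?_⟩
    · exact ((f t).lipschitz.weaken (hM t ht)).lipschitzOnWith
    · have hx' : ‖x‖ ≤ 2 * ‖x₀‖ := by
        have := norm_le_norm_add_norm_sub' x x₀
        rw [mem_closedBall_iff_norm, coe_nnnorm] at hx
        linarith
      calc ‖f t x‖ ≤ ‖f t‖ * ‖x‖ := (f t).le_opNorm x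
        _ ≤ M * (2 * ‖x₀‖) := by gcongr; exact hM t ht
        _ = _ := by push_cast; ring
    · have hmax : max (b - a) (a - a) = b - a := by simp [hab]
      simp only [hmax, NNReal.coe_mul, NNReal.coe_ofNat, coe_nnnorm, NNReal.coe_zero, sub_zero]
      nlinarith [norm_nonneg x₀]
  exact hpl.exists_eq_forall_mem_Icc_hasDerivWithinAt₀

theorem exists_isIntegralCurveOn_Icc {f : ℝ → E →L[ℝ] E} {a b : ℝ}
    (hf : ContinuousOn f (Icc a b)) (x₀ : E) :
    ∃ γ, γ a = x₀ ∧ IsIntegralCurveOn γ (fun t => f t) (Icc a b) := by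
  rcases lt_or_ge b a with hba | hab
  · exact ⟨fun _ => x₀, rfl, fun t ht => absurd (ht.1.trans ht.2) (not_le.mpr hba)⟩
  obtain ⟨C, hC⟩ := isCompact_Icc.exists_bound_of_continuousOn hf
  set M := max C 0
  set h := 1 / (2 * (M + 1))
  have hbound : ∀ t ∈ Icc a b, ‖f t‖ ≤ M := fun t ht => (hC t ht).trans (le_max_left _ _)
  have hh : 0 < h := by positivity
  have hMh : M * h ≤ 1 / 2 := by
    rw [mul_one_div, div_le_div_iff₀ (by positivity) two_pos]
    nlinarith [le_max_right C 0]
  set c : ℕ → ℝ := fun k => min b (a + k * h)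
  have hstep : ∀ k, ∃ γ, γ a = x₀ ∧ IsIntegralCurveOn γ (fun t => f t) (Icc a (c k)) := by
    intro k
    induction k with
    | zero =>
      simp only [c, CharP.cast_eq_zero, zero_mul, add_zero, min_eq_right hab]
      exact exists_isIntegralCurveOn_Icc_of_norm_le le_rfl (hf.mono (Icc_subset_Icc_right hab))
        (fun t ht => hbound t (Icc_subset_Icc_right hab ht)) (M := M) (by simp) x₀
    | succ k ih =>
      obtain ⟨γ₁, hγ₁a, hγ₁⟩ := ih
      have hac : a ≤ c k := le_min hab (le_add_of_nonneg_right (by positivity))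
      have hcc : c k ≤ c (k + 1) := min_le_min_left _ (by push_cast; linarith)
      have hsub : Icc (c k) (c (k + 1)) ⊆ Icc a b :=
        Icc_subset_Icc hac (min_le_left _ _)
      have hlen : c (k + 1) - c k ≤ h := by
        simp only [c, Nat.cast_succ]
        rcases min_cases b (a + k * h) with h' | h' <;>
          rcases min_cases b (a + (k + 1) * h) with h'' | h'' <;> nlinarith
      obtain ⟨γ₂, hγ₂, hγ₂'⟩ := exists_isIntegralCurveOn_Icc_of_norm_le hcc (hf.mono hsub)
        (fun t ht => hbound t (hsub ht))
        ((mul_le_mul_of_nonneg_left hlen (le_max_right _ _)).trans hMh) (γ₁ (c k))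
      exact ⟨_, by simp [hac, hγ₁a], hγ₁.piecewise_Icc hγ₂' hγ₂.symm⟩
  obtain ⟨k, hk⟩ := exists_nat_ge ((b - a) / h)
  have hck : c k = b := min_eq_left (by rw [div_le_iff₀ hh] at hk; linarith)
  simpa [hck] using hstep k

end LinearODE

theorem ContinuousOn.exists_continuous_eqOn_Ico {X : Type*} [TopologicalSpace X] {f : ℝ → X}
    {a b : ℝ} {L : X} (hab : a ≤ b) (hf : ContinuousOn f (Ico a b))
    (hL : Tendsto f (𝓝[<] b) (𝓝 L)) : ∃ g : ℝ → X, Continuous g ∧ EqOn g f (Ico a b) := by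
  classical
  have hcont : ContinuousOn (Function.update f b L) (Icc a b) := by
    rw [continuousOn_update_iff, Icc_sdiff_right]
    exact ⟨hf, fun _ => hL.mono_left (nhdsWithin_mono _ Ico_subset_Iio_self)⟩
  refine ⟨IccExtend hab ((Icc a b).domRestrict (Function.update f b L)),
    (continuousOn_iff_continuous_domRestrict.mp hcont).Icc_extend', fun t ht => ?_⟩
  rw [IccExtend_of_mem _ _ (Ico_subset_Icc_self ht), domRestrict_apply,
    Function.update_of_ne ht.2.ne]

theorem tendsto_nhds_or_tendsto_abs_atTop_of_tendsto_coe_ereal {α : Type*} {l : Filter α}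
    {u : α → ℝ} {L : EReal} (hu : Tendsto (fun x => (u x : EReal)) l (𝓝 L)) :
    (∃ r : ℝ, Tendsto u l (𝓝 r)) ∨ Tendsto (fun x => |u x|) l atTop := by
  induction L with
  | bot => exact .inr (tendsto_abs_atBot_atTop.comp (EReal.tendsto_coe_nhds_bot_iff.mp hu))
  | top => exact .inr (tendsto_abs_atTop_atTop.comp (EReal.tendsto_coe_nhds_top_iff.mp hu))
  | coe r => exact .inl ⟨r, EReal.tendsto_coe.mp hu⟩

theorem Matrix.continuous_toEuclideanCLM {𝕜 ι : Type*} [RCLike 𝕜] [Fintype ι] [DecidableEq ι] :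
    Continuous (Matrix.toEuclideanCLM (n := ι) (𝕜 := 𝕜)) :=
  LinearMap.continuous_of_finiteDimensional
    (Matrix.toEuclideanCLM (n := ι) (𝕜 := 𝕜)).toAlgEquiv.toLinearMap

theorem not_PTA_of_continuous_eqOn {n : ℕ} (hn : 0 < n) {τ : ℝ} (hτ : 0 < τ)
    {A B : ℝ → Matrix (Fin n) (Fin n) ℝ} (hB : Continuous B) (hBA : EqOn B A (Ico 0 τ)) :
    ¬ PTA A τ := by
  intro hPTA
  have : NeZero n := ⟨hn.ne'⟩
  obtain ⟨x₀, hx₀⟩ := exists_ne (0 : EuclideanSpace ℝ (Fin n))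
  have hf : Continuous fun t => Matrix.toEuclideanCLM (𝕜 := ℝ) (B t) :=
    Matrix.continuous_toEuclideanCLM.comp hB
  obtain ⟨γ, hγ₀, hγ⟩ := exists_isIntegralCurveOn_Icc (a := -1) (b := τ + 1) hf.continuousOn x₀
  obtain ⟨M, hM⟩ :=
    isCompact_Icc.exists_bound_of_continuousOn (hf.continuousOn (s := Icc (-1) (τ + 1)))
  have hM₀ : 0 ≤ M := (norm_nonneg _).trans (hM (-1) ⟨le_rfl, by linarith⟩)
  have hsol : ∀ t ∈ Ico 0 τ, HasDerivAt γ (mulVecE (A t) (γ t)) t := fun t ht => by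
    rw [← hBA ht]
    exact (hγ t ⟨by linarith [ht.1], by linarith [ht.2]⟩).hasDerivAt
      (Icc_mem_nhds (by linarith [ht.1]) (by linarith [ht.2]))
  have hlower : ∀ t ∈ Ico 0 τ, ‖x₀‖ ≤ ‖γ t‖ * Real.exp (M * (τ + 1)) := fun t ht => by
    have hsub : Icc (-1) t ⊆ Icc (-1) (τ + 1) := Icc_subset_Icc_right (by linarith [ht.2])
    calc ‖x₀‖ ≤ ‖γ t‖ * Real.exp (M * (t - -1)) := hγ₀ ▸
          (hγ.mono hsub).norm_le_norm_mul_exp (by linarith [ht.1])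
            fun s hs x => (ContinuousLinearMap.le_opNorm _ x).trans
              (mul_le_mul_of_nonneg_right (hM s (hsub hs)) (norm_nonneg x))
      _ ≤ ‖γ t‖ * Real.exp (M * (τ + 1)) := by gcongr; linarith [ht.2]
  have hx₀_le : ‖x₀‖ ≤ 0 * Real.exp (M * (τ + 1)) :=
    ge_of_tendsto ((hPTA γ hsol).mul_const _)
      (eventually_of_mem (Ico_mem_nhdsLT hτ) hlower)
  exact hx₀ (norm_le_zero_iff.mp (by simpa using hx₀_le))

/-- Corollary 1: a PTA system whose entries have extended-real limits
has at least one entry with `|A_{ij}(t)| → +∞` as `t → τ⁻`. -/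
theorem stmt4 {n : ℕ} (hn : 0 < n) (τ : ℝ) (hτ : 0 < τ)
    (A : ℝ → Matrix (Fin n) (Fin n) ℝ) (hA : ContinuousOn A (Set.Ico 0 τ))
    (hPTA : PTA A τ)
    (hlim : ∀ i j : Fin n, ∃ L : EReal,
      Tendsto (fun t => ((A t i j : ℝ) : EReal)) (𝓝[<] τ) (𝓝 L)) :
    ∃ i j : Fin n, Tendsto (fun t => |A t i j|) (𝓝[<] τ) atTop := by
  by_contra! hdiv
  have hfin : ∀ i j, ∃ r : ℝ, Tendsto (fun t => A t i j) (𝓝[<] τ) (𝓝 r) := fun i j =>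
    have ⟨_, hL⟩ := hlim i j
    (tendsto_nhds_or_tendsto_abs_atTop_of_tendsto_coe_ereal hL).resolve_right (hdiv i j)
  choose L hL using hfin
  have hA_lim : Tendsto A (𝓝[<] τ) (𝓝 (Matrix.of L)) :=
    tendsto_pi_nhds.2 fun i => tendsto_pi_nhds.2 (hL i)
  obtain ⟨B, hB, hBA⟩ := hA.exists_continuous_eqOn_Ico hτ.le hA_lim
  exact not_PTA_of_continuous_eqOn hn hτ hB hBA hPTA
end

section
/- Let τ > 0 and let A : [0,τ) → ℝ^{n×n} be continuous with A(t) symmetric for every t. If ∫₀ᵗ λ_max(A(s)) ds → −∞ as t → τ⁻, then every differentiable x : [0,τ) → ℝⁿ with x'(t) = A(t)x(t) satisfies ‖x(t)‖ → 0 as t → τ⁻; i.e., the system ẋ = A(t)x is prescribed-time attractive at τ. -/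
open Matrix Filter Topology

/-!
For symmetric `M` the quadratic form satisfies `⟪v, M v⟫ ≤ λ_max(M) ‖v‖²` (expand `v` in an
orthonormal eigenbasis), so along a solution `d/dt ‖x‖² = 2⟪x, A x⟫ ≤ 2 λ_max(A(t)) ‖x‖²`.
Grönwall's inequality, via the integrating factor `exp (-2 ∫₀ᵗ λ_max(A))`, gives
`‖x(t)‖ ≤ ‖x(0)‖ exp (∫₀ᵗ λ_max(A(s)) ds)`, which tends to `0`. The integral is differentiated
in `t`, which needs continuity of `t ↦ λ_max(A(t))`: `λ_max` is `1`-Lipschitz for the operator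
norm, since it is the maximum of the Rayleigh quotient and is attained at an eigenvector.
-/

open Set Real
open scoped RealInnerProductSpace

section Gronwall

variable {a b : ℝ} {g : ℝ → ℝ}

theorem le_mul_exp_integral_of_hasDerivAt_le {u u' : ℝ → ℝ} (hab : a ≤ b)
    (hu : ContinuousOn u (Icc a b)) (hu' : ∀ t ∈ Ioo a b, HasDerivAt u (u' t) t)
    (hg : ContinuousOn g (Icc a b)) (hle : ∀ t ∈ Ioo a b, u' t ≤ g t * u t) :
    u b ≤ u a * exp (∫ s in a..b, g s) := by
  set G : ℝ → ℝ := fun t => ∫ s in a..t, g s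
  have hG : ContinuousOn G (Icc a b) := by
    simpa only [uIcc_of_le hab] using intervalIntegral.continuousOn_primitive_interval'
      (hg.intervalIntegrable_of_Icc hab) left_mem_uIcc
  have hG' : ∀ t ∈ Ioo a b, HasDerivAt G (g t) t := fun t ht =>
    intervalIntegral.integral_hasDerivAt_right
      ((hg.mono (Icc_subset_Icc_right ht.2.le)).intervalIntegrable_of_Icc ht.1.le)
      ((hg.mono Ioo_subset_Icc_self).stronglyMeasurableAtFilter isOpen_Ioo t ht)
      (hg.continuousAt (Icc_mem_nhds ht.1 ht.2))
  have hanti : AntitoneOn (fun t => u t * exp (-G t)) (Icc a b) := by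
    refine antitoneOn_of_hasDerivWithinAt_nonpos (convex_Icc a b) (hu.mul hG.neg.rexp)
      (f' := fun t => (u' t - g t * u t) * exp (-G t)) (fun t ht => ?_) (fun t ht => ?_)
    · rw [interior_Icc] at ht
      refine (((hu' t ht).mul (hG' t ht).neg.exp).congr_deriv ?_).hasDerivWithinAt
      simp only [Pi.neg_apply]
      ring
    · rw [interior_Icc] at ht
      exact mul_nonpos_of_nonpos_of_nonneg (sub_nonpos.2 (hle t ht)) (exp_pos _).le
  have hba := hanti (left_mem_Icc.2 hab) (right_mem_Icc.2 hab) hab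
  simp only [G, intervalIntegral.integral_same, neg_zero, exp_zero, mul_one, Real.exp_neg] at hba
  rwa [← div_eq_mul_inv, div_le_iff₀ (exp_pos _)] at hba

theorem norm_le_norm_mul_exp_integral_of_inner_le {E : Type*} [NormedAddCommGroup E]
    [InnerProductSpace ℝ E] {x x' : ℝ → E} (hab : a ≤ b) (hx : ContinuousOn x (Icc a b))
    (hx' : ∀ t ∈ Ioo a b, HasDerivAt x (x' t) t) (hg : ContinuousOn g (Icc a b))
    (hle : ∀ t ∈ Ioo a b, ⟪x t, x' t⟫ ≤ g t * ‖x t‖ ^ 2) :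
    ‖x b‖ ≤ ‖x a‖ * exp (∫ s in a..b, g s) := by
  have hsq := le_mul_exp_integral_of_hasDerivAt_le (u := fun t => ‖x t‖ ^ 2)
    (g := fun t => 2 * g t) hab (hx.norm.pow 2) (fun t ht => (hx' t ht).norm_sq)
    (continuousOn_const.mul hg) (fun t ht => by linarith [hle t ht])
  rw [intervalIntegral.integral_const_mul, two_mul, exp_add, ← sq, ← mul_pow] at hsq
  exact (pow_le_pow_iff_left₀ (norm_nonneg _) (by positivity) two_ne_zero).1 hsq

end Gronwall

section Spectral

variable {n : ℕ} {M N : Matrix (Fin n) (Fin n) ℝ}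

theorem eigs_eq (hM : M.IsHermitian) : eigs M = hM.eigenvalues := dif_pos hM

theorem eigenvalues_le_lamMax (hM : M.IsHermitian) (i : Fin n) : hM.eigenvalues i ≤ lamMax M := by
  rw [← eigs_eq hM]
  exact le_ciSup (Finite.bddAbove_range _) i

theorem exists_eigenvalues_eq_lamMax [Nonempty (Fin n)] (hM : M.IsHermitian) :
    ∃ i, hM.eigenvalues i = lamMax M := by
  rw [lamMax, eigs_eq hM]
  exact exists_eq_ciSup_of_finite

theorem mulVecE_eigenvectorBasis (hM : M.IsHermitian) (i : Fin n) :
    mulVecE M (hM.eigenvectorBasis i) = hM.eigenvalues i • hM.eigenvectorBasis i := by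
  apply (WithLp.equiv 2 (Fin n → ℝ)).injective
  rw [mulVecE, WithLp.equiv_apply, Matrix.ofLp_toEuclideanCLM]
  simpa using hM.mulVec_eigenvectorBasis i

theorem inner_mulVecE_comm (hM : M.IsHermitian) (v w : EuclideanSpace ℝ (Fin n)) :
    ⟪mulVecE M v, w⟫ = ⟪v, mulVecE M w⟫ :=
  (hM.isSelfAdjoint.map (Matrix.toEuclideanCLM (𝕜 := ℝ))).isSymmetric v w

theorem eigenvectorBasis_repr_mulVecE (hM : M.IsHermitian) (v : EuclideanSpace ℝ (Fin n))
    (i : Fin n) :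
    hM.eigenvectorBasis.repr (mulVecE M v) i =
      hM.eigenvalues i * hM.eigenvectorBasis.repr v i := by
  rw [OrthonormalBasis.repr_apply_apply, OrthonormalBasis.repr_apply_apply,
    ← inner_mulVecE_comm hM, mulVecE_eigenvectorBasis hM i, real_inner_smul_left]

theorem inner_mulVecE_le_lamMax_mul_norm_sq (hM : M.IsHermitian)
    (v : EuclideanSpace ℝ (Fin n)) : ⟪v, mulVecE M v⟫ ≤ lamMax M * ‖v‖ ^ 2 := by
  set b := hM.eigenvectorBasis
  have hnorm : ‖v‖ ^ 2 = ∑ i, b.repr v i ^ 2 := by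
    rw [← b.repr.norm_map, EuclideanSpace.norm_sq_eq]
    simp only [Real.norm_eq_abs, sq_abs]
  have hinner : ⟪v, mulVecE M v⟫ = ∑ i, hM.eigenvalues i * b.repr v i ^ 2 := by
    rw [← b.repr.inner_map_map, PiLp.inner_apply]
    refine Finset.sum_congr rfl fun i _ => ?_
    rw [eigenvectorBasis_repr_mulVecE hM, RCLike.inner_apply, conj_trivial]
    ring
  rw [hnorm, hinner, Finset.mul_sum]
  gcongr with i
  exact eigenvalues_le_lamMax hM i

theorem lamMax_le_lamMax_add_opNorm_sub (hM : M.IsHermitian) (hN : N.IsHermitian) :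
    lamMax M ≤ lamMax N + opNorm (M - N) := by
  cases isEmpty_or_nonempty (Fin n)
  · simp only [lamMax, Real.iSup_of_isEmpty, zero_add, opNorm]
    exact norm_nonneg _
  obtain ⟨i, hi⟩ := exists_eigenvalues_eq_lamMax hM
  set v := hM.eigenvectorBasis i
  have hv : ‖v‖ = 1 := hM.eigenvectorBasis.orthonormal.1 i
  have hMv : ⟪v, mulVecE M v⟫ = lamMax M := by
    rw [mulVecE_eigenvectorBasis, real_inner_smul_right, real_inner_self_eq_norm_sq, hv, hi]
    ring
  have hNv : ⟪v, mulVecE N v⟫ ≤ lamMax N := by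
    simpa [hv] using inner_mulVecE_le_lamMax_mul_norm_sq hN v
  have hDv : ⟪v, mulVecE (M - N) v⟫ ≤ opNorm (M - N) := by
    calc ⟪v, mulVecE (M - N) v⟫ ≤ ‖v‖ * ‖mulVecE (M - N) v‖ := real_inner_le_norm _ _
      _ ≤ ‖v‖ * (opNorm (M - N) * ‖v‖) := by
        gcongr
        exact (Matrix.toEuclideanCLM (𝕜 := ℝ) (M - N)).le_opNorm v
      _ = opNorm (M - N) := by rw [hv, one_mul, mul_one]
  have hsplit : mulVecE M v = mulVecE N v + mulVecE (M - N) v := by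
    simp only [mulVecE, map_sub, _root_.sub_apply, add_sub_cancel]
  rw [← hMv, hsplit, inner_add_right]
  linarith

theorem abs_lamMax_sub_lamMax_le_opNorm_sub (hM : M.IsHermitian) (hN : N.IsHermitian) :
    |lamMax M - lamMax N| ≤ opNorm (M - N) := by
  have hsymm : opNorm (N - M) = opNorm (M - N) := by
    rw [opNorm, opNorm, ← neg_sub, map_neg, norm_neg]
  rw [abs_sub_le_iff]
  constructor
  · linarith [lamMax_le_lamMax_add_opNorm_sub hM hN]
  · linarith [lamMax_le_lamMax_add_opNorm_sub hN hM]

theorem ContinuousOn.lamMax {X : Type*} [TopologicalSpace X] {A : X → Matrix (Fin n) (Fin n) ℝ}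
    {s : Set X} (hA : ContinuousOn A s) (hsymm : ∀ t ∈ s, (A t).IsHermitian) :
    ContinuousOn (fun t => _root_.lamMax (A t)) s := by
  have hcont : Continuous (Matrix.toEuclideanCLM (n := Fin n) (𝕜 := ℝ)) :=
    LinearMap.continuous_of_finiteDimensional
      (Matrix.toEuclideanCLM (n := Fin n) (𝕜 := ℝ)).toAlgEquiv.toLinearMap
  intro t₀ ht₀
  have hT := hcont.continuousAt.comp_continuousWithinAt (hA t₀ ht₀)
  rw [ContinuousWithinAt, tendsto_iff_dist_tendsto_zero] at hT ⊢
  refine squeeze_zero' (Eventually.of_forall fun _ => dist_nonneg) ?_ hT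
  filter_upwards [self_mem_nhdsWithin] with t ht
  rw [Real.dist_eq, dist_eq_norm, Function.comp_apply, Function.comp_apply, ← map_sub]
  exact abs_lamMax_sub_lamMax_le_opNorm_sub (hsymm t ht) (hsymm t₀ ht₀)

end Spectral

/-- Remark 3: for a symmetric system, `∫₀ᵗ λ_max(A(s)) ds → -∞` as
`t → τ⁻` implies prescribed-time attractivity at `τ`. -/
theorem stmt16 {n : ℕ} (τ : ℝ) (hτ : 0 < τ)
    (A : ℝ → Matrix (Fin n) (Fin n) ℝ) (hA : ContinuousOn A (Set.Ico 0 τ))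
    (hsymm : ∀ t ∈ Set.Ico (0 : ℝ) τ, (A t).IsHermitian)
    (hint : Tendsto (fun t => ∫ s in (0 : ℝ)..t, lamMax (A s)) (𝓝[<] τ) atBot)
    (x : ℝ → EuclideanSpace ℝ (Fin n))
    (hx : ∀ t ∈ Set.Ico (0 : ℝ) τ, HasDerivAt x (mulVecE (A t) (x t)) t) :
    Tendsto (fun t => ‖x t‖) (𝓝[<] τ) (𝓝 0) := by
  have hL : ContinuousOn (fun t => lamMax (A t)) (Ico 0 τ) := hA.lamMax hsymm
  set F : ℝ → ℝ := fun t => ∫ s in (0 : ℝ)..t, lamMax (A s)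
  have hbound : ∀ t ∈ Ico 0 τ, ‖x t‖ ≤ ‖x 0‖ * exp (F t) := by
    intro t ht
    have hsub : Icc 0 t ⊆ Ico 0 τ := Icc_subset_Ico_right ht.2
    exact norm_le_norm_mul_exp_integral_of_inner_le ht.1
      (fun s hs => (hx s (hsub hs)).continuousAt.continuousWithinAt)
      (fun s hs => hx s (hsub (Ioo_subset_Icc_self hs))) (hL.mono hsub)
      (fun s hs => inner_mulVecE_le_lamMax_mul_norm_sq
        (hsymm s (hsub (Ioo_subset_Icc_self hs))) _)
  have hlim : Tendsto (fun t => ‖x 0‖ * exp (F t)) (𝓝[<] τ) (𝓝 0) := by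
    simpa using (tendsto_exp_atBot.comp hint).const_mul ‖x 0‖
  refine squeeze_zero' (Eventually.of_forall fun _ => norm_nonneg _) ?_ hlim
  filter_upwards [Ico_mem_nhdsLT hτ] with t ht using hbound t ht
end
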